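/- Let K be a field, s ≥ 3, and α ∈ K× of order greater than 2s(s−1). Suppose a matrix D over a field L represents the proper amalgam of M(Γ(K, s, α)) and M(Δ(K, t, α)) (t ≥ 3, order of α also exceeding 2t(t−1)), normalized as a gain-graph matrix D(G, σ) with all x_i and e_i edges having gain 1, and write α₁ = σ(y₁). Then the gains satisfy: σ(y_i) = α₁ for all i, σ(x) = 1, σ(y) = α₁^{s−1}, σ(z) = α₁^s, σ(f_i) = α₁^{s−1} for 1 ≤ i ≤ t and σ(f_i) = α₁^s for t+1 ≤ i ≤ 2t−1, and σ(g) = α₁^{(s−1)t} = α₁^{s(t−1)}; consequently α₁^s = α₁^t. -/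

import Mathlib

open Set

/-- The rank (as an extended natural number) of a set `X` in a matroid `M`. -/
noncomputable def Matroid.erank' {α : Type*} (M : Matroid α) (X : Set α) : ℕ∞ :=
  ⨆ I ∈ {I : Set α | M.Indep I ∧ I ⊆ X}, I.encard

/-- The rank function of the proper amalgam of `M₁` and `M₂`. -/
noncomputable def amalRank {α : Type*} (M₁ M₂ : Matroid α) (X : Set α) : ℕ∞ :=
  ⨅ Y ∈ {Y : Set α | X ⊆ Y ∧ Y ⊆ M₁.E ∪ M₂.E},
    M₁.erank' (Y ∩ M₁.E) + M₂.erank' (Y ∩ M₂.E) - M₁.erank' (Y ∩ (M₁.E ∩ M₂.E))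

/-- `A` is the proper amalgam of `M₁` and `M₂`. -/
def IsProperAmalgam {α : Type*} (M₁ M₂ A : Matroid α) : Prop :=
  A.E = M₁.E ∪ M₂.E ∧ ∀ X ⊆ M₁.E ∪ M₂.E, A.erank' X = amalRank M₁ M₂ X

/-- A matroid `M` is representable over a field `K`. -/
def RepOver (K : Type) [Field K] {α : Type*} (M : Matroid α) : Prop :=
  ∃ (ι : Type) (φ : α → (ι → K)),
    ∀ I : Set α, I ⊆ M.E → (M.Indep I ↔ LinearIndependent K (fun x : I => φ x.val))

/-- The common ground-set elements of the gain graphs `Γ(K, s, α)` (the hoop gain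
graph) and `Δ(L, t, β)` (the loop gain graph) are `a, b, x, y, z`; in addition
`Γ` has loops `a_i` (`hloop`) and the parallel edges `x_i` (`hx`), `y_i` (`hy`),
while `Δ` has the extra edge `g`, loops `b_i` (`lloop`) and the parallel edges
`e_i` (`le`), `f_i` (`lf`). -/
inductive AmalEdge (s t : ℕ) : Type
  | a | b | x | y | z | g
  | hloop (i : Fin (s - 1))
  | hx (i : Fin s)
  | hy (i : Fin s)
  | lloop (i : Fin (2 * t - 2))
  | le (i : Fin (2 * t - 1))
  | lf (i : Fin (2 * t - 1))
  deriving DecidableEq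

/-- The edges of the hoop gain graph `Γ(K, s, α)`. -/
def inHoop {s t : ℕ} : AmalEdge s t → Prop
  | .g | .lloop _ | .le _ | .lf _ => False
  | _ => True

/-- The edges of the loop gain graph `Δ(L, t, β)`. -/
def inLoopGraph {s t : ℕ} : AmalEdge s t → Prop
  | .hloop _ | .hx _ | .hy _ => False
  | _ => True

/-- The column of the matrix `D(G, σ)` corresponding to an edge oriented from
vertex `u` to vertex `v` with gain `γ`: entry `1` in row `u`, `-γ` in row `v`, zeros
elsewhere (for an unbalanced loop, `u = v` and the column is the standard basis
vector at `u`). -/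
def col {K : Type*} [Field K] (u v : ℕ) (γ : K) : ℕ → K :=
  fun i => if i = u then 1 else if i = v then -γ else 0

/-- The columns of the matrix `D(Γ(K, s, α), σ)` of the hoop gain graph on vertices
`u₁, …, u_{s+1}` (indexed `0, …, s`): loops `a` at `u₁`, `b` at `u_{s+1}`, `a_i` at
`u_i` (`2 ≤ i ≤ s`), all with gain `α`; edges `x_i` (gain `1`) and `y_i` (gain `α`)
from `u_i` to `u_{i+1}`; edges `x, y, z` from `u₁` to `u_{s+1}` with gains
`1, α^(s-1), α^s`. Edges not in `Γ` are sent to the zero vector. -/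
def hoopVec (K : Type*) [Field K] (a : K) (s t : ℕ) : AmalEdge s t → ℕ → K
  | .a => col 0 0 a
  | .b => col s s a
  | .x => col 0 s 1
  | .y => col 0 s (a ^ (s - 1))
  | .z => col 0 s (a ^ s)
  | .hloop i => col ((i : ℕ) + 1) ((i : ℕ) + 1) a
  | .hx i => col (i : ℕ) ((i : ℕ) + 1) 1
  | .hy i => col (i : ℕ) ((i : ℕ) + 1) a
  | _ => fun _ => 0

/-- The columns of the matrix `D(Δ(L, t, β), σ)` of the loop gain graph on vertices
`v₁, …, v_{2t}` (indexed `0, …, 2t-1`): loops `a` at `v₁`, `b` at `v_{2t}`, `b_i` at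
`v_i` (`2 ≤ i ≤ 2t-1`), all with gain `β`; edges `e_i` (gain `1`) and `f_i` (gain
`β^(t-1)` for `1 ≤ i ≤ t` and `β^t` for `t+1 ≤ i ≤ 2t-1`) from `v_i` to `v_{i+1}`;
edges `x, y, z, g` from `v₁` to `v_{2t}` with gains `1, β^(t-1), β^t, β^(t(t-1))`.
Edges not in `Δ` are sent to the zero vector. -/
def loopVec (K : Type*) [Field K] (b : K) (s t : ℕ) : AmalEdge s t → ℕ → K
  | .a => col 0 0 b
  | .b => col (2 * t - 1) (2 * t - 1) b
  | .x => col 0 (2 * t - 1) 1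
  | .y => col 0 (2 * t - 1) (b ^ (t - 1))
  | .z => col 0 (2 * t - 1) (b ^ t)
  | .g => col 0 (2 * t - 1) (b ^ (t * (t - 1)))
  | .lloop i => col ((i : ℕ) + 1) ((i : ℕ) + 1) b
  | .le i => col (i : ℕ) ((i : ℕ) + 1) 1
  | .lf i => col (i : ℕ) ((i : ℕ) + 1) (if (i : ℕ) < t then b ^ (t - 1) else b ^ t)
  | _ => fun _ => 0

/-- `M` is the hoop matroid `M(Γ(K, s, α))`: the gain-graphic matroid of the hoop
gain graph, realised as the column matroid of the matrix `D(Γ(K, s, α), σ)`. -/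
def IsHoopMatroid (K : Type*) [Field K] (a : K) (s t : ℕ)
    (M : Matroid (AmalEdge s t)) : Prop :=
  M.E = {e | inHoop e} ∧
    ∀ I : Set (AmalEdge s t),
      M.Indep I ↔ I ⊆ {e | inHoop e} ∧
        LinearIndependent K (fun x : I => hoopVec K a s t x.val)

/-- `M` is the loop matroid `M(Δ(L, t, β))`: the gain-graphic matroid of the loop
gain graph, realised as the column matroid of the matrix `D(Δ(L, t, β), σ)`. -/
def IsLoopMatroid (K : Type*) [Field K] (b : K) (s t : ℕ)
    (M : Matroid (AmalEdge s t)) : Prop :=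
  M.E = {e | inLoopGraph e} ∧
    ∀ I : Set (AmalEdge s t),
      M.Indep I ↔ I ⊆ {e | inLoopGraph e} ∧
        LinearIndependent K (fun x : I => loopVec K b s t x.val)

/-- The vertices of the glued gain graph `G` (obtained by identifying `u₁` with `v₁`
and `u_{s+1}` with `v_{2t}`): the hoop vertices `u₁, …, u_{s+1}` keep the indices
`0, …, s`, while the loop-graph vertex `v_i` is sent to `0` for `i = 1`, to `s` for
`i = 2t`, and to a fresh index otherwise. -/
def glueRow (s t : ℕ) (i : ℕ) : ℕ :=
  if i = 0 then 0 else if i = 2 * t - 1 then s else s + i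

/-- The columns of the gain-graph matrix `D(G, σ)` of the glued graph `G`
(with `u₁ = v₁` and `u_{s+1} = v_{2t}`) for a gain function `σ`. -/
def Dglue (L : Type) [Field L] (s t : ℕ) (σ : AmalEdge s t → L) :
    AmalEdge s t → ℕ → L
  | .a => col 0 0 (σ .a)
  | .b => col s s (σ .b)
  | .x => col 0 s (σ .x)
  | .y => col 0 s (σ .y)
  | .z => col 0 s (σ .z)
  | .g => col 0 s (σ .g)
  | .hloop i => col ((i : ℕ) + 1) ((i : ℕ) + 1) (σ (.hloop i))
  | .hx i => col (i : ℕ) ((i : ℕ) + 1) (σ (.hx i))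
  | .hy i => col (i : ℕ) ((i : ℕ) + 1) (σ (.hy i))
  | .lloop i => col (glueRow s t ((i : ℕ) + 1)) (glueRow s t ((i : ℕ) + 1)) (σ (.lloop i))
  | .le i => col (glueRow s t (i : ℕ)) (glueRow s t ((i : ℕ) + 1)) (σ (.le i))
  | .lf i => col (glueRow s t (i : ℕ)) (glueRow s t ((i : ℕ) + 1)) (σ (.lf i))

section Helpers
variable {α : Type*}

lemma le_erank'_of_indep {M : Matroid α} {I X : Set α} (hI : M.Indep I) (hIX : I ⊆ X) :
    I.encard ≤ M.erank' X :=
  le_iSup₂ (f := fun (I : Set α) (_ : I ∈ {I : Set α | M.Indep I ∧ I ⊆ X}) => I.encard)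
    I ⟨hI, hIX⟩

lemma erank'_le {M : Matroid α} {X : Set α} {b : ℕ∞}
    (h : ∀ I, M.Indep I → I ⊆ X → I.encard ≤ b) : M.erank' X ≤ b :=
  iSup₂_le fun I hI => h I hI.1 hI.2

lemma erank'_le_encard (M : Matroid α) (X : Set α) : M.erank' X ≤ X.encard :=
  erank'_le fun _ _ hIX => encard_mono hIX

lemma erank'_le_of_not_indep {M : Matroid α} {C : Set α} (hfin : C.Finite)
    (hdep : ¬ M.Indep C) : M.erank' C ≤ C.encard - 1 :=
  erank'_le fun I hI hIC => by
    have hne : I ≠ C := fun h => hdep (h ▸ hI)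
    have hlt : I.encard < C.encard := (hfin.subset hIC).encard_lt_encard (ssubset_of_subset_of_ne hIC hne)
    exact (ENat.addLECancellable_of_ne_top (by simp)).le_tsub_of_add_le_right (Order.add_one_le_of_lt hlt)

lemma not_encard_le_sub {C : Set α} (hfin : C.Finite) (hne : C.Nonempty) :
    ¬ (C.encard ≤ C.encard - 1) := by
  intro hle
  obtain ⟨n, hn⟩ : ∃ n : ℕ, C.encard = n := ⟨hfin.toFinset.card, hfin.encard_eq_coe_toFinset_card⟩
  have h1 : 1 ≤ C.encard := one_le_encard_iff_nonempty.2 hne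
  rw [hn] at hle h1
  rw [show ((1:ℕ∞)) = ((1:ℕ):ℕ∞) by norm_num, ← ENat.coe_sub, Nat.cast_le] at hle
  rw [show ((1:ℕ∞)) = ((1:ℕ):ℕ∞) by norm_num, Nat.cast_le] at h1
  omega

lemma not_indep_of_dep_right {M₁ M₂ A : Matroid α} (hA : IsProperAmalgam M₁ M₂ A)
    {C : Set α} (hC : C ⊆ M₂.E) (hfin : C.Finite) (hne : C.Nonempty)
    (hdep : ¬ M₂.Indep C) : ¬ A.Indep C := by
  intro hind
  have hCE : C ⊆ M₁.E ∪ M₂.E := hC.trans subset_union_right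
  have h1 : C.encard ≤ A.erank' C := le_erank'_of_indep hind subset_rfl
  rw [hA.2 C hCE] at h1
  have h2 : amalRank M₁ M₂ C ≤
      M₁.erank' (C ∩ M₁.E) + M₂.erank' (C ∩ M₂.E) - M₁.erank' (C ∩ (M₁.E ∩ M₂.E)) :=
    iInf₂_le C ⟨subset_rfl, hCE⟩
  have e1 : C ∩ M₂.E = C := inter_eq_self_of_subset_left hC
  have e2 : C ∩ (M₁.E ∩ M₂.E) = C ∩ M₁.E := by
    rw [inter_comm M₁.E, ← inter_assoc, e1]
  have hu : M₁.erank' (C ∩ M₁.E) ≠ ⊤ :=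
    ((erank'_le_encard M₁ (C ∩ M₁.E)).trans_lt
      (hfin.inter_of_left _).encard_lt_top).ne
  rw [e1, e2, (ENat.addLECancellable_of_ne_top hu).add_tsub_cancel_left] at h2
  exact not_encard_le_sub hfin hne
    (h1.trans (h2.trans (erank'_le_of_not_indep hfin hdep)))

lemma not_indep_of_dep_left {M₁ M₂ A : Matroid α} (hA : IsProperAmalgam M₁ M₂ A)
    {C : Set α} (hC : C ⊆ M₁.E) (hfin : C.Finite) (hne : C.Nonempty)
    (hdep : ¬ M₁.Indep C)
    (hcross : M₂.erank' (C ∩ M₂.E) ≤ M₁.erank' (C ∩ M₂.E)) : ¬ A.Indep C := by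
  intro hind
  have hCE : C ⊆ M₁.E ∪ M₂.E := hC.trans subset_union_left
  have h1 : C.encard ≤ A.erank' C := le_erank'_of_indep hind subset_rfl
  rw [hA.2 C hCE] at h1
  have h2 : amalRank M₁ M₂ C ≤
      M₁.erank' (C ∩ M₁.E) + M₂.erank' (C ∩ M₂.E) - M₁.erank' (C ∩ (M₁.E ∩ M₂.E)) :=
    iInf₂_le C ⟨subset_rfl, hCE⟩
  have e1 : C ∩ M₁.E = C := inter_eq_self_of_subset_left hC
  have e2 : C ∩ (M₁.E ∩ M₂.E) = C ∩ M₂.E := by rw [← inter_assoc, e1]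
  rw [e1, e2] at h2
  have h3 : M₁.erank' C + M₂.erank' (C ∩ M₂.E) - M₁.erank' (C ∩ M₂.E) ≤ M₁.erank' C := by
    rw [tsub_le_iff_right]; exact add_le_add_right hcross _
  exact not_encard_le_sub hfin hne
    (h1.trans (h2.trans (h3.trans (erank'_le_of_not_indep hfin hdep))))

end Helpers

section Cycle
variable {L : Type*} [Field L]

lemma telescope (r : ℕ → ℕ) (γ : ℕ → L) :
    ∀ n, 1 ≤ n → (∀ i ≤ n, ∀ j ≤ n, r i = r j → i = j) →
    ∑ j ∈ Finset.range n, (∏ l ∈ Finset.range j, γ l) • col (r j) (r (j+1)) (γ j)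
      = col (r 0) (r n) (∏ l ∈ Finset.range n, γ l) := by
  intro n hn
  induction n, hn using Nat.le_induction with
  | base =>
    intro _
    simp
  | succ n hn IH =>
    intro hr
    have hr' : ∀ i ≤ n, ∀ j ≤ n, r i = r j → i = j := fun i hi j hj h =>
      hr i (hi.trans (Nat.le_succ n)) j (hj.trans (Nat.le_succ n)) h
    rw [Finset.sum_range_succ, IH hr', Finset.prod_range_succ]
    funext i
    have h01 : r 0 ≠ r n := fun h => by have := hr 0 (by omega) n (by omega) h; omega
    have h02 : r 0 ≠ r (n+1) := fun h => by have := hr 0 (by omega) (n+1) (by omega) h; omega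
    have h12 : r n ≠ r (n+1) := fun h => by have := hr n (by omega) (n+1) (by omega) h; omega
    simp only [Pi.add_apply, Pi.smul_apply, col, smul_eq_mul]
    rcases eq_or_ne i (r 0) with hA | hA
    · subst hA; simp [h01, h02]
    · rcases eq_or_ne i (r n) with hB | hB
      · subst hB; simp [Ne.symm h01, h12]
      · rcases eq_or_ne i (r (n+1)) with hC | hC
        · subst hC; simp [Ne.symm h02, Ne.symm h12]
        · simp [hA, hB, hC]

lemma keyDep {ι : Type*} (v : ι → ℕ → L)
    (n : ℕ) (hn : 1 ≤ n) (e : ℕ → ι) (r : ℕ → ℕ)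
    (he : ∀ i ≤ n, ∀ j ≤ n, e i = e j → i = j)
    (hr : ∀ i ≤ n, ∀ j ≤ n, r i = r j → i = j)
    (γ : ℕ → L)
    (hv : ∀ j < n, v (e j) = col (r j) (r (j+1)) (γ j))
    (hvn : v (e n) = col (r 0) (r n) (∏ l ∈ Finset.range n, γ l)) :
    ¬ LinearIndependent L (fun x : {x : ι | ∃ j ≤ n, e j = x} => v x.val) := by
  intro hli
  set C := {x : ι | ∃ j ≤ n, e j = x} with hC
  have hw : ∀ j : Fin (n+1), e (j : ℕ) ∈ C := fun j => ⟨j, Nat.lt_succ_iff.1 j.2, rfl⟩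
  have hwi : Function.Injective (fun j : Fin (n+1) => (⟨e (j : ℕ), hw j⟩ : C)) := by
    intro i j hij
    exact Fin.ext (he i (Nat.lt_succ_iff.1 i.2) j (Nat.lt_succ_iff.1 j.2)
      (congrArg Subtype.val hij))
  have hli2 := hli.comp _ hwi
  rw [Fintype.linearIndependent_iff] at hli2
  have hzero := hli2 (fun j => if (j : ℕ) = n then -1 else ∏ l ∈ Finset.range (j:ℕ), γ l)
    ?_ ⟨n, by omega⟩
  · simp at hzero
  · show ∑ j : Fin (n+1), _ • v (e (j:ℕ)) = 0
    rw [Fin.sum_univ_eq_sum_range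
      (fun j => (if j = n then (-1:L) else ∏ l ∈ Finset.range j, γ l) • v (e j)) (n+1)]
    rw [Finset.sum_range_succ, if_pos rfl]
    have : ∑ j ∈ Finset.range n, (if j = n then (-1:L) else ∏ l ∈ Finset.range j, γ l) • v (e j)
        = ∑ j ∈ Finset.range n, (∏ l ∈ Finset.range j, γ l) • col (r j) (r (j+1)) (γ j) := by
      apply Finset.sum_congr rfl
      intro j hj
      rw [Finset.mem_range] at hj
      rw [if_neg (by omega), hv j hj]
    rw [this, telescope r γ n hn hr, hvn]
    simp

lemma col_app {n : ℕ} {r : ℕ → ℕ} (hr : ∀ i ≤ n, ∀ j ≤ n, r i = r j → i = j)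
    {u w k : ℕ} (hu : u ≤ n) (hw : w ≤ n) (hk : k ≤ n) (γ : L) :
    col (r u) (r w) γ (r k) = if k = u then 1 else if k = w then -γ else 0 := by
  unfold col
  by_cases h1 : k = u
  · subst h1; simp
  · have h1' : r k ≠ r u := fun h => h1 (hr k hk u hu h)
    rw [if_neg h1', if_neg h1]
    by_cases h2 : k = w
    · subst h2; simp
    · have h2' : r k ≠ r w := fun h => h2 (hr k hk w hw h)
      rw [if_neg h2', if_neg h2]

lemma key {ι : Type*} [DecidableEq ι] (v : ι → ℕ → L)
    (n : ℕ) (hn : 1 ≤ n) (e : ℕ → ι) (r : ℕ → ℕ)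
    (he : ∀ i ≤ n, ∀ j ≤ n, e i = e j → i = j)
    (hr : ∀ i ≤ n, ∀ j ≤ n, r i = r j → i = j)
    (γ : ℕ → L) (δ : L)
    (hv : ∀ j < n, v (e j) = col (r j) (r (j+1)) (γ j))
    (hvn : v (e n) = col (r 0) (r n) δ)
    (hdep : ¬ LinearIndependent L (fun x : {x : ι | ∃ j ≤ n, e j = x} => v x.val)) :
    δ = ∏ l ∈ Finset.range n, γ l := by
  set C := {x : ι | ∃ j ≤ n, e j = x} with hCdef
  have hdep' : ¬ LinearIndependent L (v ∘ (Subtype.val : C → ι)) := hdep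
  rw [linearIndependent_comp_subtype_iff, linearIndepOn_iff] at hdep'
  push_neg at hdep'
  obtain ⟨l, hlsupp, hl0, hlne⟩ := hdep'
  set c : ℕ → L := fun j => l (e j) with hcdef
  -- the linear combination as a sum over range (n+1)
  have hsum : ∑ j ∈ Finset.range (n+1), c j • v (e j) = 0 := by
    rw [Finsupp.linearCombination_apply, Finsupp.sum] at hl0
    have hss : l.support ⊆ (Finset.range (n+1)).image e := by
      intro x hx
      obtain ⟨j, hj, rfl⟩ := hlsupp hx
      exact Finset.mem_image.2 ⟨j, Finset.mem_range.2 (by omega), rfl⟩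
    rw [Finset.sum_subset hss (fun x _ hx => by
      rw [Finsupp.notMem_support_iff.1 hx, zero_smul]),
      Finset.sum_image (fun i hi j hj hij =>
      he i (Nat.lt_succ_iff.1 (Finset.mem_range.1 hi))
        j (Nat.lt_succ_iff.1 (Finset.mem_range.1 hj)) hij)] at hl0
    exact hl0
  -- row equations
  have H : ∀ k ≤ n, (∑ j ∈ Finset.range n, c j * col (r j) (r (j+1)) (γ j) (r k))
      + c n * col (r 0) (r n) δ (r k) = 0 := by
    intro k hk
    have := congrFun (congrArg (fun f => f) hsum) (r k)
    rw [Finset.sum_range_succ] at hsum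
    have h2 := congrFun hsum (r k)
    simp only [Pi.add_apply, Finset.sum_apply, Pi.smul_apply, smul_eq_mul, Pi.zero_apply] at h2
    rw [hvn] at h2
    rw [← h2]
    congr 1
    apply Finset.sum_congr rfl
    intro j hj
    rw [hv j (Finset.mem_range.1 hj)]
  have eq0 : c 0 + c n = 0 := by
    have h := H 0 (Nat.zero_le n)
    rw [col_app hr (Nat.zero_le n) le_rfl (Nat.zero_le n), if_pos rfl] at h
    have hterm : ∀ j ∈ Finset.range n, c j * col (r j) (r (j+1)) (γ j) (r 0)
        = if j = 0 then c 0 else 0 := by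
      intro j hj
      have hjn := Finset.mem_range.1 hj
      rw [col_app hr (by omega) (by omega) (Nat.zero_le n)]
      by_cases h1 : j = 0
      · subst h1; simp
      · rw [if_neg (by omega), if_neg (by omega), if_neg h1, mul_zero]
    rw [Finset.sum_congr rfl hterm, Finset.sum_ite_eq' (Finset.range n) 0 (fun _ => c 0),
      if_pos (Finset.mem_range.2 (by omega)), mul_one] at h
    exact h
  have eqmid : ∀ k, 1 ≤ k → k < n → c k = γ (k-1) * c (k-1) := by
    intro k hk1 hkn
    have h := H k (by omega)
    rw [col_app hr (Nat.zero_le n) le_rfl (by omega), if_neg (by omega), if_neg (by omega),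
      mul_zero, add_zero] at h
    have hterm : ∀ j ∈ Finset.range n, c j * col (r j) (r (j+1)) (γ j) (r k)
        = (if j = k then c k else 0) + (if j = k-1 then -(γ (k-1) * c (k-1)) else 0) := by
      intro j hj
      have hjn := Finset.mem_range.1 hj
      rw [col_app hr (by omega) (by omega) (by omega)]
      by_cases h1 : j = k
      · subst h1; rw [if_pos rfl, if_pos rfl, if_neg (by omega), mul_one, add_zero]
      · by_cases h2 : j = k - 1
        · subst h2
          rw [if_neg (by omega), if_pos (by omega), if_neg (by omega), if_pos rfl, zero_add]
          ring
        · rw [if_neg (by omega), if_neg (by omega), if_neg h1, if_neg h2, mul_zero, add_zero]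
    rw [Finset.sum_congr rfl hterm, Finset.sum_add_distrib,
      Finset.sum_ite_eq' (Finset.range n) k (fun _ => c k),
      Finset.sum_ite_eq' (Finset.range n) (k-1) (fun _ => -(γ (k-1) * c (k-1))),
      if_pos (Finset.mem_range.2 (by omega)), if_pos (Finset.mem_range.2 (by omega))] at h
    linear_combination h
  have eqn : γ (n-1) * c (n-1) + δ * c n = 0 := by
    have h := H n le_rfl
    rw [col_app hr (Nat.zero_le n) le_rfl le_rfl, if_neg (by omega), if_pos rfl] at h
    have hterm : ∀ j ∈ Finset.range n, c j * col (r j) (r (j+1)) (γ j) (r n)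
        = if j = n-1 then -(γ (n-1) * c (n-1)) else 0 := by
      intro j hj
      have hjn := Finset.mem_range.1 hj
      rw [col_app hr (by omega) (by omega) le_rfl]
      by_cases h2 : j = n - 1
      · subst h2
        rw [if_neg (by omega), if_pos (by omega), if_pos rfl]
        ring
      · rw [if_neg (by omega), if_neg (by omega), if_neg h2, mul_zero]
    rw [Finset.sum_congr rfl hterm,
      Finset.sum_ite_eq' (Finset.range n) (n-1) (fun _ => -(γ (n-1) * c (n-1))),
      if_pos (Finset.mem_range.2 (by omega))] at h
    linear_combination -h
  have hprop : ∀ k, k < n → c k = (∏ l ∈ Finset.range k, γ l) * c 0 := by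
    intro k
    induction k with
    | zero => intro _; simp
    | succ m IH =>
      intro hk
      have h1 := eqmid (m+1) (by omega) hk
      rw [Nat.add_sub_cancel] at h1
      rw [h1, IH (by omega), Finset.prod_range_succ]
      ring
  have hc0 : c n = -c 0 := by linear_combination eq0
  have hcn1 : c (n-1) = (∏ l ∈ Finset.range (n-1), γ l) * c 0 := hprop (n-1) (by omega)
  rw [hcn1, hc0] at eqn
  have key0 : (γ (n-1) * ∏ l ∈ Finset.range (n-1), γ l - δ) * c 0 = 0 := by
    linear_combination eqn
  have hPr : ∏ l ∈ Finset.range n, γ l = γ (n-1) * ∏ l ∈ Finset.range (n-1), γ l := by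
    conv_lhs => rw [show n = n - 1 + 1 by omega, Finset.prod_range_succ]
    ring
  rcases mul_eq_zero.1 key0 with h | h
  · rw [hPr]
    linear_combination -h
  · exfalso
    obtain ⟨x, hx⟩ := Finsupp.ne_iff.1 hlne
    rw [Finsupp.coe_zero, Pi.zero_apply] at hx
    obtain ⟨j, hj, rfl⟩ := hlsupp (Finsupp.mem_support_iff.2 hx)
    have hcj : c j ≠ 0 := hx
    rcases Nat.lt_or_ge j n with hjn | hjn
    · exact hcj (by rw [hprop j hjn, h, mul_zero])
    · have : j = n := by omega
      subst this
      exact hcj (by rw [hc0, h, neg_zero])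

end Cycle


section Prods
variable {M : Type*} [CommMonoid M]

lemma prod_ite_one (c : M) (m i : ℕ) (hi : i < m) :
    ∏ j ∈ Finset.range m, (if j = i then 1 else c) = c ^ (m - 1) := by
  rw [← Finset.mul_prod_erase _ _ (Finset.mem_range.2 hi), if_pos rfl, one_mul,
    Finset.prod_congr rfl (fun j hj => if_neg (Finset.ne_of_mem_erase hj)),
    Finset.prod_const, Finset.card_erase_of_mem (Finset.mem_range.2 hi), Finset.card_range]

lemma prod_ite_single (f : ℕ → M) (m i : ℕ) (hi : i < m) :
    ∏ j ∈ Finset.range m, (if j = i then f j else 1) = f i := by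
  rw [Finset.prod_ite_eq' (Finset.range m) i f, if_pos (Finset.mem_range.2 hi)]

lemma mul_prod_ite (f : ℕ → M) (m i : ℕ) (hi : i < m) :
    f i * ∏ j ∈ Finset.range m, (if j = i then 1 else f j)
      = ∏ j ∈ Finset.range m, f j := by
  conv_rhs => rw [← Finset.mul_prod_erase _ f (Finset.mem_range.2 hi)]
  congr 1
  rw [← Finset.mul_prod_erase _ _ (Finset.mem_range.2 hi), if_pos rfl, one_mul]
  exact Finset.prod_congr rfl (fun j hj => if_neg (Finset.ne_of_mem_erase hj))

lemma prod_split_lt (f : ℕ → M) (t : ℕ) (ht : 1 ≤ t) :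
    ∏ j ∈ Finset.range (2*t-1), (if j < t then f j else 1)
      = ∏ j ∈ Finset.range t, f j := by
  rw [show 2*t-1 = t + (t-1) by omega, Finset.prod_range_add,
    Finset.prod_congr rfl (fun j hj => if_pos (Finset.mem_range.1 hj)),
    Finset.prod_congr rfl (fun j _ => if_neg (by omega)), Finset.prod_const_one, mul_one]

lemma prod_split_ge (f : ℕ → M) (t : ℕ) (ht : 1 ≤ t) :
    ∏ j ∈ Finset.range (2*t-1), (if j < t then 1 else f j)
      = ∏ j ∈ Finset.range (t-1), f (t + j) := by
  rw [show 2*t-1 = t + (t-1) by omega, Finset.prod_range_add,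
    Finset.prod_congr rfl (fun j hj => if_pos (Finset.mem_range.1 hj)),
    Finset.prod_congr rfl (fun j _ => if_neg (by omega)), Finset.prod_const_one, one_mul]
end Prods

section Master
variable (K : Type) [Field K] (L : Type) [Field L] {s t : ℕ} (a : K)

lemma col_ne_zero {K : Type*} [Field K] (u v : ℕ) (γ : K) : col u v γ ≠ 0 := fun h => by
  have := congrFun h u
  simp [col] at this

lemma master_hoop (M₁ M₂ A : Matroid (AmalEdge s t))
    (hM₁ : IsHoopMatroid K a s t M₁) (hM₂ : IsLoopMatroid K a s t M₂)
    (hA : IsProperAmalgam M₁ M₂ A)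
    (σ : AmalEdge s t → L)
    (hrep : ∀ I : Set (AmalEdge s t), I ⊆ A.E →
      (A.Indep I ↔ LinearIndependent L (fun x : I => Dglue L s t σ x.val)))
    (n : ℕ) (hn : 1 ≤ n) (e : ℕ → AmalEdge s t) (rK rL : ℕ → ℕ)
    (he : ∀ i ≤ n, ∀ j ≤ n, e i = e j → i = j)
    (hrK : ∀ i ≤ n, ∀ j ≤ n, rK i = rK j → i = j)
    (hrL : ∀ i ≤ n, ∀ j ≤ n, rL i = rL j → i = j)
    (γK : ℕ → K) (γL : ℕ → L) (δ : L)
    (hhoop : ∀ j ≤ n, inHoop (e j))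
    (hloopn : inLoopGraph (e n))
    (hloopj : ∀ j < n, ¬ inLoopGraph (e j))
    (hvK : ∀ j < n, hoopVec K a s t (e j) = col (rK j) (rK (j+1)) (γK j))
    (hvKn : hoopVec K a s t (e n) = col (rK 0) (rK n) (∏ l ∈ Finset.range n, γK l))
    (hvL : ∀ j < n, Dglue L s t σ (e j) = col (rL j) (rL (j+1)) (γL j))
    (hvLn : Dglue L s t σ (e n) = col (rL 0) (rL n) δ) :
    δ = ∏ l ∈ Finset.range n, γL l := by
  set C := {x : AmalEdge s t | ∃ j ≤ n, e j = x} with hCdef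
  have hCfin : C.Finite := ((Set.finite_Iic n).image e).subset
    (by rintro x ⟨j, hj, rfl⟩; exact ⟨j, hj, rfl⟩)
  have hCne : C.Nonempty := ⟨e 0, 0, Nat.zero_le n, rfl⟩
  have hCE1 : C ⊆ M₁.E := by
    rw [hM₁.1]; rintro x ⟨j, hj, rfl⟩; exact hhoop j hj
  have hdepK : ¬ M₁.Indep C := fun h =>
    keyDep (hoopVec K a s t) n hn e rK he hrK γK hvK hvKn ((hM₁.2 C).1 h).2
  have hcrossSet : C ∩ M₂.E = {e n} := by
    rw [hM₂.1]; ext x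
    constructor
    · rintro ⟨⟨j, hj, rfl⟩, hx⟩
      rcases Nat.lt_or_ge j n with h | h
      · exact absurd hx (hloopj j h)
      · have hjn : j = n := le_antisymm hj h
        subst hjn; rfl
    · rintro rfl
      exact ⟨⟨n, le_rfl, rfl⟩, hloopn⟩
  have hIndep1 : M₁.Indep {e n} := by
    rw [hM₁.2]
    refine ⟨by rintro x rfl; exact hhoop n le_rfl, ?_⟩
    exact linearIndependent_unique_iff.2 (by
      show hoopVec K a s t (e n) ≠ 0
      rw [hvKn]; exact col_ne_zero _ _ _)
  have hcross : M₂.erank' (C ∩ M₂.E) ≤ M₁.erank' (C ∩ M₂.E) := by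
    rw [hcrossSet]
    refine (erank'_le_encard _ _).trans ?_
    rw [Set.encard_singleton]
    simpa using le_erank'_of_indep hIndep1 subset_rfl
  have hnind : ¬ A.Indep C := not_indep_of_dep_left hA hCE1 hCfin hCne hdepK hcross
  have hCA : C ⊆ A.E := by rw [hA.1]; exact hCE1.trans Set.subset_union_left
  have hdepL : ¬ LinearIndependent L (fun x : C => Dglue L s t σ x.val) :=
    fun h => hnind ((hrep C hCA).2 h)
  exact key (Dglue L s t σ) n hn e rL he hrL γL δ hvL hvLn hdepL

lemma master_loop (M₁ M₂ A : Matroid (AmalEdge s t))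
    (hM₂ : IsLoopMatroid K a s t M₂)
    (hA : IsProperAmalgam M₁ M₂ A)
    (σ : AmalEdge s t → L)
    (hrep : ∀ I : Set (AmalEdge s t), I ⊆ A.E →
      (A.Indep I ↔ LinearIndependent L (fun x : I => Dglue L s t σ x.val)))
    (n : ℕ) (hn : 1 ≤ n) (e : ℕ → AmalEdge s t) (rK rL : ℕ → ℕ)
    (he : ∀ i ≤ n, ∀ j ≤ n, e i = e j → i = j)
    (hrK : ∀ i ≤ n, ∀ j ≤ n, rK i = rK j → i = j)
    (hrL : ∀ i ≤ n, ∀ j ≤ n, rL i = rL j → i = j)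
    (γK : ℕ → K) (γL : ℕ → L) (δ : L)
    (hloop : ∀ j ≤ n, inLoopGraph (e j))
    (hvK : ∀ j < n, loopVec K a s t (e j) = col (rK j) (rK (j+1)) (γK j))
    (hvKn : loopVec K a s t (e n) = col (rK 0) (rK n) (∏ l ∈ Finset.range n, γK l))
    (hvL : ∀ j < n, Dglue L s t σ (e j) = col (rL j) (rL (j+1)) (γL j))
    (hvLn : Dglue L s t σ (e n) = col (rL 0) (rL n) δ) :
    δ = ∏ l ∈ Finset.range n, γL l := by
  set C := {x : AmalEdge s t | ∃ j ≤ n, e j = x} with hCdef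
  have hCfin : C.Finite := ((Set.finite_Iic n).image e).subset
    (by rintro x ⟨j, hj, rfl⟩; exact ⟨j, hj, rfl⟩)
  have hCne : C.Nonempty := ⟨e 0, 0, Nat.zero_le n, rfl⟩
  have hCE2 : C ⊆ M₂.E := by
    rw [hM₂.1]; rintro x ⟨j, hj, rfl⟩; exact hloop j hj
  have hdepK : ¬ M₂.Indep C := fun h =>
    keyDep (loopVec K a s t) n hn e rK he hrK γK hvK hvKn ((hM₂.2 C).1 h).2
  have hnind : ¬ A.Indep C := not_indep_of_dep_right hA hCE2 hCfin hCne hdepK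
  have hCA : C ⊆ A.E := by rw [hA.1]; exact hCE2.trans Set.subset_union_right
  have hdepL : ¬ LinearIndependent L (fun x : C => Dglue L s t σ x.val) :=
    fun h => hnind ((hrep C hCA).2 h)
  exact key (Dglue L s t σ) n hn e rL he hrL γL δ hvL hvLn hdepL

end Master

/-- Suppose a gain-graph matrix `D(G, σ)` over a field `L`, normalized so that all
`x_i` and `e_i` edges have gain `1`, represents the proper amalgam of the hoop
matroid `M(Γ(K, s, α))` and the loop matroid `M(Δ(K, t, α))`. Then, writing
`α₁ = σ(y₁)`, the gains satisfy `σ(y_i) = α₁` for all `i`, `σ(x) = 1`,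
`σ(y) = α₁^(s-1)`, `σ(z) = α₁^s`, `σ(f_i) = α₁^(s-1)` for `1 ≤ i ≤ t` and
`σ(f_i) = α₁^s` for `t+1 ≤ i ≤ 2t-1`, and `σ(g) = α₁^((s-1)t) = α₁^(s(t-1))`;
consequently `α₁^s = α₁^t`. -/
theorem gain_normalization (K : Type) [Field K] (s t : ℕ)
    (hs : 3 ≤ s) (ht : 3 ≤ t)
    (a : K) (ha : a ≠ 0)
    (horder : ∀ k : ℕ, 1 ≤ k →
      k ≤ max (2 * s * (s - 1)) (2 * t * (t - 1)) → a ^ k ≠ 1)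
    (M₁ M₂ A : Matroid (AmalEdge s t))
    (hM₁ : IsHoopMatroid K a s t M₁)
    (hM₂ : IsLoopMatroid K a s t M₂)
    (hA : IsProperAmalgam M₁ M₂ A)
    (L : Type) [Field L] (σ : AmalEdge s t → L)
    (hσ : ∀ e, σ e ≠ 0)
    (hσx : ∀ i : Fin s, σ (.hx i) = 1)
    (hσe : ∀ i : Fin (2 * t - 1), σ (.le i) = 1)
    (hrep : ∀ I : Set (AmalEdge s t), I ⊆ A.E →
      (A.Indep I ↔ LinearIndependent L (fun x : I => Dglue L s t σ x.val))) :
    ∃ α₁ : L,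
      (∀ i : Fin s, σ (.hy i) = α₁) ∧
      σ AmalEdge.x = 1 ∧
      σ AmalEdge.y = α₁ ^ (s - 1) ∧
      σ AmalEdge.z = α₁ ^ s ∧
      (∀ i : Fin (2 * t - 1),
        ((i : ℕ) < t → σ (.lf i) = α₁ ^ (s - 1)) ∧
        (t ≤ (i : ℕ) → σ (.lf i) = α₁ ^ s)) ∧
      σ AmalEdge.g = α₁ ^ ((s - 1) * t) ∧
      σ AmalEdge.g = α₁ ^ (s * (t - 1)) ∧
      α₁ ^ s = α₁ ^ t := by
  
  classical
  have hs1 : 1 ≤ s := by omega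
  have ht1 : 1 ≤ t := by omega
  have hg0 : glueRow s t 0 = 0 := by unfold glueRow; rw [if_pos rfl]
  have hgn : glueRow s t (2*t-1) = s := by unfold glueRow; rw [if_neg (by omega), if_pos rfl]
  have hglue : ∀ i ≤ 2*t-1, ∀ j ≤ 2*t-1, glueRow s t i = glueRow s t j → i = j := by
    intro i hi j hj h
    unfold glueRow at h
    split_ifs at h <;> omega
  have hid : ∀ m : ℕ, ∀ i ≤ m, ∀ j ≤ m, (fun x : ℕ => x) i = (fun x : ℕ => x) j → i = j :=
    fun m i _ j _ h => h
  -- Cycle 1 : σ x = 1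
  have hx1 : σ AmalEdge.x = 1 := by
    have h := master_hoop K L a M₁ M₂ A hM₁ hM₂ hA σ hrep s hs1
      (fun j => if h : j < s then AmalEdge.hx ⟨j, h⟩ else AmalEdge.x)
      (fun x => x) (fun x => x)
      (by
        intro i hi j hj h
        by_cases h1 : i < s <;> by_cases h2 : j < s
        · simp only [dif_pos h1, dif_pos h2, AmalEdge.hx.injEq, Fin.mk.injEq] at h; exact h
        · simp [dif_pos h1, dif_neg h2] at h
        · simp [dif_neg h1, dif_pos h2] at h
        · omega)
      (hid s) (hid s)
      (fun _ => 1) (fun _ => 1) (σ AmalEdge.x)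
      (by intro j hj; by_cases h : j < s
          · simp only [dif_pos h]; trivial
          · simp only [dif_neg h]; trivial)
      (by simp only [dif_neg (lt_irrefl s)]; trivial)
      (by intro j hj; simp only [dif_pos hj, inLoopGraph]; exact fun h => h)
      (by intro j hj; simp only [dif_pos hj]; rfl)
      (by simp only [dif_neg (lt_irrefl s), Finset.prod_const_one]; rfl)
      (by intro j hj; simp only [dif_pos hj, Dglue, hσx])
      (by simp only [dif_neg (lt_irrefl s)]; rfl)
    rw [h, Finset.prod_const_one]
  
  set Y : ℕ → L := fun j => if h : j < s then σ (.hy ⟨j, h⟩) else 1 with hYdef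
  set F : ℕ → L := fun j => if h : j < 2*t-1 then σ (.lf ⟨j, h⟩) else 1 with hFdef
  -- Cycle 2 : for each i < s, σ y = ∏_{j ≠ i} Y j
  have hy2 : ∀ i, ∀ hi : i < s,
      σ AmalEdge.y = ∏ j ∈ Finset.range s, (if j = i then 1 else Y j) := by
    intro i hi
    exact master_hoop K L a M₁ M₂ A hM₁ hM₂ hA σ hrep s hs1
      (fun j => if h : j < s then
        (if j = i then AmalEdge.hx ⟨i, hi⟩ else AmalEdge.hy ⟨j, h⟩) else AmalEdge.y)
      (fun x => x) (fun x => x)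
      (by
        intro i1 hi1 j1 hj1 h
        by_cases h1 : i1 < s <;> by_cases h2 : j1 < s
        · simp only [dif_pos h1, dif_pos h2] at h
          by_cases p1 : i1 = i <;> by_cases p2 : j1 = i
          · omega
          · rw [if_pos p1, if_neg p2] at h; simp at h
          · rw [if_neg p1, if_pos p2] at h; simp at h
          · rw [if_neg p1, if_neg p2] at h
            simp only [AmalEdge.hy.injEq, Fin.mk.injEq] at h; exact h
        · simp only [dif_pos h1, dif_neg h2] at h
          by_cases p1 : i1 = i
          · rw [if_pos p1] at h; simp at h
          · rw [if_neg p1] at h; simp at h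
        · simp only [dif_neg h1, dif_pos h2] at h
          by_cases p2 : j1 = i
          · rw [if_pos p2] at h; simp at h
          · rw [if_neg p2] at h; simp at h
        · omega)
      (hid s) (hid s)
      (fun j => if j = i then 1 else a)
      (fun j => if j = i then 1 else Y j)
      (σ AmalEdge.y)
      (by intro j hj; by_cases h : j < s
          · simp only [dif_pos h]
            by_cases p : j = i
            · rw [if_pos p]; trivial
            · rw [if_neg p]; trivial
          · simp only [dif_neg h]; trivial)
      (by simp only [dif_neg (lt_irrefl s)]; trivial)
      (by intro j hj; simp only [dif_pos hj]
          by_cases p : j = i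
          · rw [if_pos p]; exact fun h => h
          · rw [if_neg p]; exact fun h => h)
      (by intro j hj; simp only [dif_pos hj]
          by_cases p : j = i
          · subst p; rw [if_pos rfl, if_pos rfl]; rfl
          · rw [if_neg p, if_neg p]; rfl)
      (by simp only [dif_neg (lt_irrefl s)]
          rw [prod_ite_one a s i hi]; rfl)
      (by intro j hj; simp only [dif_pos hj]
          by_cases p : j = i
          · subst p; rw [if_pos rfl, if_pos rfl]
            simp only [Dglue, hσx]
          · rw [if_neg p, if_neg p]
            simp only [hYdef, dif_pos hj, Dglue])
      (by simp only [dif_neg (lt_irrefl s)]; rfl)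
  -- all Y values are equal
  have hY0 : ∀ i, ∀ hi : i < s, Y i = Y 0 := by
    intro i hi
    have h1 : σ AmalEdge.y * Y i = ∏ j ∈ Finset.range s, Y j := by
      rw [hy2 i hi, mul_comm, mul_prod_ite Y s i hi]
    have h0 : σ AmalEdge.y * Y 0 = ∏ j ∈ Finset.range s, Y j := by
      rw [hy2 0 (by omega), mul_comm, mul_prod_ite Y s 0 (by omega)]
    exact mul_left_cancel₀ (hσ AmalEdge.y) (h1.trans h0.symm)
  set α₁ : L := σ (.hy ⟨0, by omega⟩) with hα₁
  have hY0v : Y 0 = α₁ := by simp only [hYdef]; rw [dif_pos (by omega : (0:ℕ) < s)]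
  have hYval : ∀ i, ∀ hi : i < s, Y i = α₁ := fun i hi => (hY0 i hi).trans hY0v
  have hα₁ne : α₁ ≠ 0 := hσ _
  have hhy : ∀ i : Fin s, σ (.hy i) = α₁ := by
    intro i
    have := hYval i.1 i.2
    simp only [hYdef] at this
    rw [dif_pos i.2] at this
    rwa [Fin.eta] at this
  -- σ y = α₁ ^ (s-1)
  have hprodY : ∏ j ∈ Finset.range s, Y j = α₁ ^ s := by
    rw [Finset.prod_congr rfl (fun j hj => hYval j (Finset.mem_range.1 hj)),
      Finset.prod_const, Finset.card_range]
  have hyval : σ AmalEdge.y = α₁ ^ (s - 1) := by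
    have h1 : σ AmalEdge.y * Y 0 = ∏ j ∈ Finset.range s, Y j := by
      rw [hy2 0 (by omega), mul_comm, mul_prod_ite Y s 0 (by omega)]
    rw [hY0v, hprodY] at h1
    have h2 : α₁ ^ s = α₁ ^ (s-1) * α₁ := by
      rw [← pow_succ]; congr 1; omega
    rw [h2] at h1
    exact mul_right_cancel₀ hα₁ne h1
  -- Cycle 3 : σ z = α₁ ^ s
  have hzval : σ AmalEdge.z = α₁ ^ s := by
    have h := master_hoop K L a M₁ M₂ A hM₁ hM₂ hA σ hrep s hs1
      (fun j => if h : j < s then AmalEdge.hy ⟨j, h⟩ else AmalEdge.z)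
      (fun x => x) (fun x => x)
      (by
        intro i hi j hj h
        by_cases h1 : i < s <;> by_cases h2 : j < s
        · simp only [dif_pos h1, dif_pos h2, AmalEdge.hy.injEq, Fin.mk.injEq] at h; exact h
        · simp [dif_pos h1, dif_neg h2] at h
        · simp [dif_neg h1, dif_pos h2] at h
        · omega)
      (hid s) (hid s)
      (fun _ => a) (fun j => Y j) (σ AmalEdge.z)
      (by intro j hj; by_cases h : j < s
          · simp only [dif_pos h]; trivial
          · simp only [dif_neg h]; trivial)
      (by simp only [dif_neg (lt_irrefl s)]; trivial)
      (by intro j hj; simp only [dif_pos hj]; exact fun h => h)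
      (by intro j hj; simp only [dif_pos hj]; rfl)
      (by simp only [dif_neg (lt_irrefl s)]
          rw [Finset.prod_const, Finset.card_range]; rfl)
      (by intro j hj; simp only [dif_pos hj]
          simp only [hYdef, dif_pos hj, Dglue])
      (by simp only [dif_neg (lt_irrefl s)]; rfl)
    rw [h, Finset.prod_congr rfl (fun j hj => hYval j (Finset.mem_range.1 hj)),
      Finset.prod_const, Finset.card_range]
  -- Cycle 4 : σ (lf i) values
  have hf4 : ∀ i, ∀ hi : i < 2*t-1,
      F i = if i < t then α₁ ^ (s-1) else α₁ ^ s := by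
    intro i hi
    rcases Nat.lt_or_ge i t with hit | hit
    · have h := master_loop K L a M₁ M₂ A hM₂ hA σ hrep (2*t-1) (by omega)
        (fun j => if h : j < 2*t-1 then
          (if j = i then AmalEdge.lf ⟨i, hi⟩ else AmalEdge.le ⟨j, h⟩) else AmalEdge.y)
        (fun x => x) (glueRow s t)
        (by
          intro i1 hi1 j1 hj1 h
          by_cases h1 : i1 < 2*t-1 <;> by_cases h2 : j1 < 2*t-1
          · simp only [dif_pos h1, dif_pos h2] at h
            by_cases p1 : i1 = i <;> by_cases p2 : j1 = i
            · omega
            · rw [if_pos p1, if_neg p2] at h; simp at h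
            · rw [if_neg p1, if_pos p2] at h; simp at h
            · rw [if_neg p1, if_neg p2] at h
              simp only [AmalEdge.le.injEq, Fin.mk.injEq] at h; exact h
          · simp only [dif_pos h1, dif_neg h2] at h
            by_cases p1 : i1 = i
            · rw [if_pos p1] at h; simp at h
            · rw [if_neg p1] at h; simp at h
          · simp only [dif_neg h1, dif_pos h2] at h
            by_cases p2 : j1 = i
            · rw [if_pos p2] at h; simp at h
            · rw [if_neg p2] at h; simp at h
          · omega)
        (hid (2*t-1)) hglue
        (fun j => if j = i then a^(t-1) else 1)
        (fun j => if j = i then F i else 1)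
        (σ AmalEdge.y)
        (by intro j hj; by_cases h : j < 2*t-1
            · simp only [dif_pos h]
              by_cases p : j = i
              · rw [if_pos p]; trivial
              · rw [if_neg p]; trivial
            · simp only [dif_neg h]; trivial)
        (by intro j hj; simp only [dif_pos hj]
            by_cases p : j = i
            · subst p; rw [if_pos rfl, if_pos rfl]
              show loopVec K a s t (AmalEdge.lf ⟨j, hi⟩) = _
              simp only [loopVec]
              rw [if_pos hit]
            · rw [if_neg p, if_neg p]; rfl)
        (by simp only [dif_neg (lt_irrefl (2*t-1))]
            rw [prod_ite_single (fun _ => a^(t-1)) (2*t-1) i hi]; rfl)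
        (by intro j hj; simp only [dif_pos hj]
            by_cases p : j = i
            · subst p; rw [if_pos rfl, if_pos rfl]
              simp only [hFdef, dif_pos hj, Dglue]
            · rw [if_neg p, if_neg p]
              simp only [Dglue, hσe])
        (by simp only [dif_neg (lt_irrefl (2*t-1))]
            show Dglue L s t σ AmalEdge.y
              = col (glueRow s t 0) (glueRow s t (2*t-1)) (σ AmalEdge.y)
            rw [hg0, hgn]; rfl)
      rw [if_pos hit, ← hyval, h, prod_ite_single (fun _ => F i) (2*t-1) i hi]
    · have h := master_loop K L a M₁ M₂ A hM₂ hA σ hrep (2*t-1) (by omega)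
        (fun j => if h : j < 2*t-1 then
          (if j = i then AmalEdge.lf ⟨i, hi⟩ else AmalEdge.le ⟨j, h⟩) else AmalEdge.z)
        (fun x => x) (glueRow s t)
        (by
          intro i1 hi1 j1 hj1 h
          by_cases h1 : i1 < 2*t-1 <;> by_cases h2 : j1 < 2*t-1
          · simp only [dif_pos h1, dif_pos h2] at h
            by_cases p1 : i1 = i <;> by_cases p2 : j1 = i
            · omega
            · rw [if_pos p1, if_neg p2] at h; simp at h
            · rw [if_neg p1, if_pos p2] at h; simp at h
            · rw [if_neg p1, if_neg p2] at h
              simp only [AmalEdge.le.injEq, Fin.mk.injEq] at h; exact h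
          · simp only [dif_pos h1, dif_neg h2] at h
            by_cases p1 : i1 = i
            · rw [if_pos p1] at h; simp at h
            · rw [if_neg p1] at h; simp at h
          · simp only [dif_neg h1, dif_pos h2] at h
            by_cases p2 : j1 = i
            · rw [if_pos p2] at h; simp at h
            · rw [if_neg p2] at h; simp at h
          · omega)
        (hid (2*t-1)) hglue
        (fun j => if j = i then a^t else 1)
        (fun j => if j = i then F i else 1)
        (σ AmalEdge.z)
        (by intro j hj; by_cases h : j < 2*t-1
            · simp only [dif_pos h]
              by_cases p : j = i
              · rw [if_pos p]; trivial
              · rw [if_neg p]; trivial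
            · simp only [dif_neg h]; trivial)
        (by intro j hj; simp only [dif_pos hj]
            by_cases p : j = i
            · subst p; rw [if_pos rfl, if_pos rfl]
              show loopVec K a s t (AmalEdge.lf ⟨j, hi⟩) = _
              simp only [loopVec]
              rw [if_neg (by omega)]
            · rw [if_neg p, if_neg p]; rfl)
        (by simp only [dif_neg (lt_irrefl (2*t-1))]
            rw [prod_ite_single (fun _ => a^t) (2*t-1) i hi]; rfl)
        (by intro j hj; simp only [dif_pos hj]
            by_cases p : j = i
            · subst p; rw [if_pos rfl, if_pos rfl]
              simp only [hFdef, dif_pos hj, Dglue]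
            · rw [if_neg p, if_neg p]
              simp only [Dglue, hσe])
        (by simp only [dif_neg (lt_irrefl (2*t-1))]
            show Dglue L s t σ AmalEdge.z
              = col (glueRow s t 0) (glueRow s t (2*t-1)) (σ AmalEdge.z)
            rw [hg0, hgn]; rfl)
      rw [if_neg (by omega), ← hzval, h, prod_ite_single (fun _ => F i) (2*t-1) i hi]
  have hlf : ∀ i : Fin (2*t-1),
      ((i : ℕ) < t → σ (.lf i) = α₁ ^ (s - 1)) ∧ (t ≤ (i : ℕ) → σ (.lf i) = α₁ ^ s) := by
    intro i
    have h := hf4 i.1 i.2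
    simp only [hFdef] at h
    rw [dif_pos i.2, Fin.eta] at h
    constructor
    · intro hit; rw [h, if_pos hit]
    · intro hit; rw [h, if_neg (by omega)]
  -- Cycle 5 : σ g = α₁ ^ ((s-1) * t)
  have hg5 : σ AmalEdge.g = α₁ ^ ((s-1) * t) := by
    have h := master_loop K L a M₁ M₂ A hM₂ hA σ hrep (2*t-1) (by omega)
      (fun j => if h : j < 2*t-1 then
        (if j < t then AmalEdge.lf ⟨j, h⟩ else AmalEdge.le ⟨j, h⟩) else AmalEdge.g)
      (fun x => x) (glueRow s t)
      (by
        intro i1 hi1 j1 hj1 h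
        by_cases h1 : i1 < 2*t-1 <;> by_cases h2 : j1 < 2*t-1
        · simp only [dif_pos h1, dif_pos h2] at h
          by_cases p1 : i1 < t <;> by_cases p2 : j1 < t
          · rw [if_pos p1, if_pos p2] at h
            simp only [AmalEdge.lf.injEq, Fin.mk.injEq] at h; exact h
          · rw [if_pos p1, if_neg p2] at h; simp at h
          · rw [if_neg p1, if_pos p2] at h; simp at h
          · rw [if_neg p1, if_neg p2] at h
            simp only [AmalEdge.le.injEq, Fin.mk.injEq] at h; exact h
        · simp only [dif_pos h1, dif_neg h2] at h
          by_cases p1 : i1 < t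
          · rw [if_pos p1] at h; simp at h
          · rw [if_neg p1] at h; simp at h
        · simp only [dif_neg h1, dif_pos h2] at h
          by_cases p2 : j1 < t
          · rw [if_pos p2] at h; simp at h
          · rw [if_neg p2] at h; simp at h
        · omega)
      (hid (2*t-1)) hglue
      (fun j => if j < t then a^(t-1) else 1)
      (fun j => if j < t then F j else 1)
      (σ AmalEdge.g)
      (by intro j hj; by_cases h : j < 2*t-1
          · simp only [dif_pos h]
            by_cases p : j < t
            · rw [if_pos p]; trivial
            · rw [if_neg p]; trivial
          · simp only [dif_neg h]; trivial)
      (by intro j hj; simp only [dif_pos hj]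
          by_cases p : j < t
          · rw [if_pos p, if_pos p]
            show loopVec K a s t (AmalEdge.lf ⟨j, hj⟩) = _
            simp only [loopVec]
            rw [if_pos p]
          · rw [if_neg p, if_neg p]; rfl)
      (by simp only [dif_neg (lt_irrefl (2*t-1))]
          rw [prod_split_lt (fun _ => a^(t-1)) t ht1, Finset.prod_const, Finset.card_range,
            ← pow_mul, Nat.mul_comm (t-1) t]
          rfl)
      (by intro j hj; simp only [dif_pos hj]
          by_cases p : j < t
          · rw [if_pos p, if_pos p]
            simp only [hFdef, dif_pos hj, Dglue]
          · rw [if_neg p, if_neg p]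
            simp only [Dglue, hσe])
      (by simp only [dif_neg (lt_irrefl (2*t-1))]
          show Dglue L s t σ AmalEdge.g
            = col (glueRow s t 0) (glueRow s t (2*t-1)) (σ AmalEdge.g)
          rw [hg0, hgn]; rfl)
    rw [h, prod_split_lt F t ht1,
      Finset.prod_congr rfl (fun j hj => by
        rw [hf4 j (by have := Finset.mem_range.1 hj; omega), if_pos (Finset.mem_range.1 hj)]),
      Finset.prod_const, Finset.card_range, ← pow_mul]
  -- Cycle 6 : σ g = α₁ ^ (s * (t-1))
  have hg6 : σ AmalEdge.g = α₁ ^ (s * (t-1)) := by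
    have h := master_loop K L a M₁ M₂ A hM₂ hA σ hrep (2*t-1) (by omega)
      (fun j => if h : j < 2*t-1 then
        (if j < t then AmalEdge.le ⟨j, h⟩ else AmalEdge.lf ⟨j, h⟩) else AmalEdge.g)
      (fun x => x) (glueRow s t)
      (by
        intro i1 hi1 j1 hj1 h
        by_cases h1 : i1 < 2*t-1 <;> by_cases h2 : j1 < 2*t-1
        · simp only [dif_pos h1, dif_pos h2] at h
          by_cases p1 : i1 < t <;> by_cases p2 : j1 < t
          · rw [if_pos p1, if_pos p2] at h
            simp only [AmalEdge.le.injEq, Fin.mk.injEq] at h; exact h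
          · rw [if_pos p1, if_neg p2] at h; simp at h
          · rw [if_neg p1, if_pos p2] at h; simp at h
          · rw [if_neg p1, if_neg p2] at h
            simp only [AmalEdge.lf.injEq, Fin.mk.injEq] at h; exact h
        · simp only [dif_pos h1, dif_neg h2] at h
          by_cases p1 : i1 < t
          · rw [if_pos p1] at h; simp at h
          · rw [if_neg p1] at h; simp at h
        · simp only [dif_neg h1, dif_pos h2] at h
          by_cases p2 : j1 < t
          · rw [if_pos p2] at h; simp at h
          · rw [if_neg p2] at h; simp at h
        · omega)
      (hid (2*t-1)) hglue
      (fun j => if j < t then 1 else a^t)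
      (fun j => if j < t then 1 else F j)
      (σ AmalEdge.g)
      (by intro j hj; by_cases h : j < 2*t-1
          · simp only [dif_pos h]
            by_cases p : j < t
            · rw [if_pos p]; trivial
            · rw [if_neg p]; trivial
          · simp only [dif_neg h]; trivial)
      (by intro j hj; simp only [dif_pos hj]
          by_cases p : j < t
          · rw [if_pos p, if_pos p]; rfl
          · rw [if_neg p, if_neg p]
            show loopVec K a s t (AmalEdge.lf ⟨j, hj⟩) = _
            simp only [loopVec]
            rw [if_neg p])
      (by simp only [dif_neg (lt_irrefl (2*t-1))]
          rw [prod_split_ge (fun _ => a^t) t ht1, Finset.prod_const, Finset.card_range,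
            ← pow_mul]
          rfl)
      (by intro j hj; simp only [dif_pos hj]
          by_cases p : j < t
          · rw [if_pos p, if_pos p]
            simp only [Dglue, hσe]
          · rw [if_neg p, if_neg p]
            simp only [hFdef, dif_pos hj, Dglue])
      (by simp only [dif_neg (lt_irrefl (2*t-1))]
          show Dglue L s t σ AmalEdge.g
            = col (glueRow s t 0) (glueRow s t (2*t-1)) (σ AmalEdge.g)
          rw [hg0, hgn]; rfl)
    have hc : ∏ j ∈ Finset.range (t-1), F (t+j)
        = ∏ _j ∈ Finset.range (t-1), (α₁ ^ s) := by
      refine Finset.prod_congr rfl (fun j hj => ?_)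
      have hjr := Finset.mem_range.1 hj
      rw [hf4 (t+j) (by omega), if_neg (by omega)]
    rw [h, prod_split_ge F t ht1, hc,
      Finset.prod_const, Finset.card_range, ← pow_mul]
  -- final : α₁ ^ s = α₁ ^ t
  have hst : α₁ ^ s = α₁ ^ t := by
    have h1 : α₁ ^ ((s-1)*t) = α₁ ^ (s*(t-1)) := by rw [← hg5, hg6]
    have h2 : α₁ ^ ((s-1)*t) * α₁ ^ (s+t) = α₁ ^ (s*(t-1)) * α₁ ^ (s+t) := by rw [h1]
    rw [← pow_add, ← pow_add] at h2
    have htst : t ≤ s*t := Nat.le_mul_of_pos_left t (by omega)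
    have hsst : s ≤ s*t := Nat.le_mul_of_pos_right s (by omega)
    have e1 : (s-1)*t + (s+t) = s*t + s := by
      have h3 : (s-1)*t = s*t - 1*t := by rw [Nat.sub_mul]
      omega
    have e2 : s*(t-1) + (s+t) = s*t + t := by
      have h3 : s*(t-1) = s*t - s*1 := by rw [Nat.mul_sub]
      omega
    rw [e1, e2, pow_add, pow_add] at h2
    exact mul_left_cancel₀ (pow_ne_zero _ hα₁ne) h2
  exact ⟨α₁, hhy, hx1, hyval, hzval, hlf, hg5, hg6, hst⟩
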